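/- For |q|<1, $\sum_{i,j\geq 0} \frac{q^{3i^2+4j^2+4ij-2i}}{(q^4;q^4)_i (q^4;q^4)_j} = \sum_{i,j\geq 0} \frac{q^{i^2+4ij+4j^2+4j}}{(q^4;q^4)_i (q^8;q^8)_j}$, i.e. the two double-sum Nahm-type series of Example 8 with $B=(-1/2,0)^T$ (after scaling $q\to q^4$) are equal. -/

import Mathlib

/-!
Put `x = q⁴` and group both double sums by `n = a + 2b`. The exponents become `n² + 4·C(a, 2)` and
`n² + 4b`, so the `n`-th groups are `qⁿ²` times the coefficients of `zⁿ` in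
`(-z; x)_∞ / (z²; x)_∞` and in `1 / ((z; x)_∞ (xz²; x²)_∞)`. These power series agree by the two
product identities `(-z; x)_∞ = (z²; x²)_∞ / (z; x)_∞` and `(z; x²)_∞ / (z; x)_∞ = 1 / (xz; x²)_∞`.
Each of these is proved by checking that both sides solve the same `q`-difference equation
`f(z) u(z) = f(yz) v(z)`, whose power-series solution is determined by its constant term as soon as
`y` is not a root of unity.
-/

open PowerSeries Finset Filter Topology

section Rescale

variable {R : Type*} [CommRing R]

@[simp]
lemma constantCoeff_rescale (a : R) (f : R⟦X⟧) : constantCoeff (rescale a f) = constantCoeff f := by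
  rw [← coeff_zero_eq_constantCoeff_apply, coeff_rescale, pow_zero, one_mul,
    coeff_zero_eq_constantCoeff_apply]

lemma rescale_comm (a b : R) (f : R⟦X⟧) : rescale a (rescale b f) = rescale b (rescale a f) := by
  rw [rescale_rescale, rescale_rescale, mul_comm]

lemma expand_rescale_pow (p : ℕ) (hp : p ≠ 0) (a : R) (f : R⟦X⟧) :
    expand p hp (rescale (a ^ p) f) = rescale a (expand p hp f) := by
  ext n
  simp only [coeff_expand, coeff_rescale]
  split_ifs with h
  · obtain ⟨k, rfl⟩ := h
    rw [Nat.mul_div_cancel_left _ (Nat.pos_of_ne_zero hp), ← pow_mul, mul_comm p]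
  · rw [mul_zero]

end Rescale

section QExp

variable {K : Type*} [Field K] {y : K}

/-- `(y; y)ₙ`. -/
def qPochhammer (y : K) (n : ℕ) : K := ∏ k ∈ range n, (1 - y ^ (k + 1))

@[simp]
lemma qPochhammer_zero (y : K) : qPochhammer y 0 = 1 := prod_range_zero _

lemma qPochhammer_succ (y : K) (n : ℕ) :
    qPochhammer y (n + 1) = qPochhammer y n * (1 - y ^ (n + 1)) :=
  prod_range_succ _ _

lemma one_sub_pow_ne_zero (hy : ¬IsOfFinOrder y) {n : ℕ} (hn : n ≠ 0) : 1 - y ^ n ≠ 0 :=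
  sub_ne_zero.2 fun h => hy (isOfFinOrder_iff_pow_eq_one.2 ⟨n, Nat.pos_of_ne_zero hn, h.symm⟩)

lemma qPochhammer_ne_zero (hy : ¬IsOfFinOrder y) (n : ℕ) : qPochhammer y n ≠ 0 :=
  prod_ne_zero_iff.2 fun k _ => one_sub_pow_ne_zero hy k.succ_ne_zero

lemma prod_one_sub_pow_mul_eq_qPochhammer (q : K) (m n : ℕ) :
    ∏ k ∈ range n, (1 - q ^ (m * (k + 1))) = qPochhammer (q ^ m) n := by
  simp [qPochhammer, pow_mul]

/-- `qExp y` and `qExpBig y` are Euler's two `q`-exponentials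
`e_y(z) = 1 / (z; y)_∞` and `E_y(z) = (-z; y)_∞`, expanded as power series in `z`. -/
def qExp (y : K) : K⟦X⟧ := mk fun n => (qPochhammer y n)⁻¹

def qExpBig (y : K) : K⟦X⟧ := mk fun n => y ^ n.choose 2 / qPochhammer y n

lemma qExp_mul_one_sub_X (hy : ¬IsOfFinOrder y) : qExp y * (1 - X) = rescale y (qExp y) := by
  ext (_ | n)
  · simp [qExp]
  · have := one_sub_pow_ne_zero hy n.succ_ne_zero
    have := qPochhammer_ne_zero hy n
    simp only [mul_sub, mul_one, map_sub, coeff_succ_mul_X, coeff_rescale, qExp, coeff_mk,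
      qPochhammer_succ]
    field_simp
    ring

lemma qExpBig_eq_one_add_X_mul (hy : ¬IsOfFinOrder y) :
    qExpBig y = (1 + X) * rescale y (qExpBig y) := by
  ext (_ | n)
  · simp [qExpBig]
  · have := one_sub_pow_ne_zero hy n.succ_ne_zero
    have := qPochhammer_ne_zero hy n
    simp only [add_mul, one_mul, map_add, coeff_succ_X_mul, coeff_rescale, qExpBig, coeff_mk,
      qPochhammer_succ, Nat.choose_succ_succ', Nat.choose_one_right]
    field_simp
    ring

/-- Once `f₀, …, fₙ₋₁` vanish, the coefficient of `Xⁿ` in `f U = f(yX) V` reads `fₙ = yⁿ fₙ`. -/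
lemma eq_of_mul_eq_rescale_mul (hy : ¬IsOfFinOrder y) {U V F G : K⟦X⟧}
    (hU : constantCoeff U = 1) (hV : constantCoeff V = 1)
    (hF : F * U = rescale y F * V) (hG : G * U = rescale y G * V)
    (h0 : constantCoeff F = constantCoeff G) : F = G := by
  have hdiff : (F - G) * U = rescale y (F - G) * V := by rw [map_sub, sub_mul, sub_mul, hF, hG]
  have hdvd : ∀ n, X ^ n ∣ F - G := by
    intro n
    induction n with
    | zero => simp
    | succ n ih =>
      obtain ⟨H, hH⟩ := ih
      have hX : X ^ n * (H * U) = X ^ n * (C (y ^ n) * rescale y H * V) := by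
        rw [hH, map_mul, map_pow, rescale_X, mul_pow, ← map_pow] at hdiff
        linear_combination hdiff
      have hc := congrArg constantCoeff (mul_left_cancel₀ (pow_ne_zero n X_ne_zero) hX)
      simp only [map_mul, hU, hV, constantCoeff_C, constantCoeff_rescale, mul_one] at hc
      have hH0 : constantCoeff H = 0 := by
        rcases n.eq_zero_or_pos with rfl | hn
        · simpa [h0] using (congrArg constantCoeff hH).symm
        · have hc' : (1 - y ^ n) * constantCoeff H = 0 := by linear_combination hc
          exact (mul_eq_zero.1 hc').resolve_left (one_sub_pow_ne_zero hy hn.ne')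
      rw [hH, pow_succ]
      exact mul_dvd_mul_left _ (X_dvd_iff.2 hH0)
  exact sub_eq_zero.1 <| ext fun n => X_pow_dvd_iff.1 (hdvd (n + 1)) n n.lt_succ_self

lemma rescale_neg_one_qExpBig (hy : ¬IsOfFinOrder y) :
    rescale (-1) (qExpBig y) = (1 - X) * rescale y (rescale (-1) (qExpBig y)) := by
  conv_lhs => rw [qExpBig_eq_one_add_X_mul hy]
  rw [map_mul, map_add, map_one, rescale_neg_one_X, rescale_comm, sub_eq_add_neg]

variable {x : K}

lemma rescale_sq_qExp (hx : ¬IsOfFinOrder x) :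
    rescale (x ^ 2) (qExp x) = qExp x * (1 - X) * (1 - C x * X) := by
  rw [sq, rescale_mul, RingHom.comp_apply, ← qExp_mul_one_sub_X hx, map_mul, map_sub, map_one,
    rescale_X, ← qExp_mul_one_sub_X hx]

/-- `(z; x²)_∞ / (z; x)_∞ = 1 / (xz; x²)_∞`. -/
lemma qExpBig_neg_sq_mul_qExp (hx : ¬IsOfFinOrder x) :
    rescale (-1) (qExpBig (x ^ 2)) * qExp x = rescale x (qExp (x ^ 2)) := by
  have hx2 : ¬IsOfFinOrder (x ^ 2) := by simpa [isOfFinOrder_pow] using hx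
  refine eq_of_mul_eq_rescale_mul hx2 (U := 1 - C x * X) (V := 1) (by simp) (by simp) ?_ ?_ ?_
  · rw [map_mul, rescale_sq_qExp hx]
    nth_rewrite 1 [rescale_neg_one_qExpBig hx2]
    ring
  · rw [rescale_comm, ← qExp_mul_one_sub_X hx2, map_mul, map_sub, map_one, rescale_X, mul_one]
  · simp [qExp, qExpBig]

/-- `(z²; x²)_∞ / (z; x)_∞ = (-z; x)_∞`. -/
lemma expand_qExpBig_neg_sq_mul_qExp (hx : ¬IsOfFinOrder x) :
    expand 2 two_ne_zero (rescale (-1) (qExpBig (x ^ 2))) * qExp x = qExpBig x := by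
  have hx2 : ¬IsOfFinOrder (x ^ 2) := by simpa [isOfFinOrder_pow] using hx
  have hA := congrArg (expand 2 two_ne_zero) (rescale_neg_one_qExpBig hx2)
  rw [map_mul, map_sub, map_one, expand_X, expand_rescale_pow] at hA
  refine eq_of_mul_eq_rescale_mul hx (U := 1) (V := 1 + X) (by simp) (by simp) ?_ ?_ ?_
  · rw [map_mul, ← qExp_mul_one_sub_X hx]
    nth_rewrite 1 [hA]
    ring
  · rw [mul_one, mul_comm]
    exact qExpBig_eq_one_add_X_mul hx
  · simp [qExp, qExpBig]

theorem qExpBig_mul_expand_qExp (hx : ¬IsOfFinOrder x) :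
    qExpBig x * expand 2 two_ne_zero (qExp x) =
      qExp x * expand 2 two_ne_zero (rescale x (qExp (x ^ 2))) := by
  rw [← expand_qExpBig_neg_sq_mul_qExp hx, ← qExpBig_neg_sq_mul_qExp hx, map_mul]
  ring

end QExp

lemma summable_pow_sq_mul_pow {r : ℝ} (hr0 : 0 ≤ r) (hr1 : r < 1) (M : ℝ) :
    Summable fun n : ℕ => r ^ (n ^ 2) * M ^ n := by
  have hlim : Tendsto (fun n : ℕ => r ^ n * M) atTop (𝓝 0) := by
    simpa using (tendsto_pow_atTop_nhds_zero_of_lt_one hr0 hr1).mul_const M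
  refine .of_norm_bounded_eventually_nat summable_geometric_two ?_
  filter_upwards [hlim.eventually (Metric.closedBall_mem_nhds 0 one_half_pos)] with n hn
  rw [sq, pow_mul, ← mul_pow, norm_pow]
  exact pow_le_pow_left₀ (norm_nonneg _) (mem_closedBall_zero_iff.1 hn) n

lemma Summable.tsum_eq_tsum_sum_antidiagonal {α : Type*} [AddCommGroup α] [TopologicalSpace α]
    [IsTopologicalAddGroup α] [T3Space α] {f : ℕ × ℕ → α} (hf : Summable f) :
    ∑' p, f p = ∑' n, ∑ p ∈ antidiagonal n, f p := by
  rw [← HasAntidiagonal.sigmaAntidiagonalEquivProd.tsum_eq f]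
  refine ((HasAntidiagonal.sigmaAntidiagonalEquivProd.summable_iff).2 hf).tsum_sigma'
    (fun n => (hasSum_fintype _).summable) |>.trans (tsum_congr fun n => ?_)
  rw [tsum_fintype]
  exact sum_coe_sort (antidiagonal n) _

section Analytic

variable {𝕜 : Type*} [NormedField 𝕜]

lemma norm_mul_inv_qPochhammer_le {c y : 𝕜} (hc : ‖c‖ ≤ 1) (hy : ‖y‖ < 1) (n : ℕ) :
    ‖c * (qPochhammer y n)⁻¹‖ ≤ (1 - ‖y‖)⁻¹ ^ n := by
  have hy' : 0 < 1 - ‖y‖ := sub_pos.2 hy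
  have hP : (1 - ‖y‖) ^ n ≤ ‖qPochhammer y n‖ := by
    rw [qPochhammer, norm_prod, pow_eq_prod_const]
    refine prod_le_prod (fun _ _ => hy'.le) fun k _ => ?_
    calc 1 - ‖y‖ ≤ ‖(1 : 𝕜)‖ - ‖y ^ (k + 1)‖ := by
          rw [norm_one, norm_pow]
          gcongr
          exact pow_le_of_le_one (norm_nonneg y) hy.le k.succ_ne_zero
      _ ≤ ‖1 - y ^ (k + 1)‖ := norm_sub_norm_le _ _
  rw [norm_mul, norm_inv, inv_pow]
  exact (mul_le_of_le_one_left (by positivity) hc).trans (inv_anti₀ (pow_pos hy' n) hP)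

lemma norm_coeff_qExp_le {y : 𝕜} (hy : ‖y‖ < 1) (n : ℕ) : ‖coeff n (qExp y)‖ ≤ (1 - ‖y‖)⁻¹ ^ n := by
  simpa [qExp] using norm_mul_inv_qPochhammer_le (norm_one (α := 𝕜)).le hy n

lemma norm_coeff_qExpBig_le {y : 𝕜} (hy : ‖y‖ < 1) (n : ℕ) :
    ‖coeff n (qExpBig y)‖ ≤ (1 - ‖y‖)⁻¹ ^ n := by
  rw [qExpBig, coeff_mk, div_eq_mul_inv]
  exact norm_mul_inv_qPochhammer_le (by rw [norm_pow]; exact pow_le_one₀ (norm_nonneg y) hy.le) hy n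

lemma norm_coeff_rescale_qExp_le {a y : 𝕜} (hy : ‖y‖ < 1) (ha : ‖a‖ ≤ 1) (n : ℕ) :
    ‖coeff n (rescale a (qExp y))‖ ≤ (1 - ‖y‖)⁻¹ ^ n := by
  rw [coeff_rescale, qExp, coeff_mk]
  exact norm_mul_inv_qPochhammer_le (by rw [norm_pow]; exact pow_le_one₀ (norm_nonneg a) ha) hy n

variable [CompleteSpace 𝕜]

lemma summable_pow_sq_mul_coeff_mul_coeff {q : 𝕜} (hq : ‖q‖ < 1) {U V : 𝕜⟦X⟧} {M N : ℝ}
    (hU : ∀ n, ‖coeff n U‖ ≤ M ^ n) (hV : ∀ n, ‖coeff n V‖ ≤ N ^ n) :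
    Summable fun p : ℕ × ℕ => q ^ ((p.1 + 2 * p.2) ^ 2) * (coeff p.1 U * coeff p.2 V) := by
  have hM : 0 ≤ M := (norm_nonneg _).trans (by simpa using hU 1)
  have hN : 0 ≤ N := (norm_nonneg _).trans (by simpa using hV 1)
  refine .of_norm_bounded ((summable_pow_sq_mul_pow (norm_nonneg q) hq M).mul_of_nonneg
    (summable_pow_sq_mul_pow (norm_nonneg q) hq N) (fun _ => by positivity)
    (fun _ => by positivity)) fun ⟨a, b⟩ => ?_
  have hq' : ‖q‖ ^ ((a + 2 * b) ^ 2) ≤ ‖q‖ ^ (a ^ 2 + b ^ 2) :=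
    pow_le_pow_of_le_one (norm_nonneg q) hq.le
      (by nlinarith [Nat.zero_le (a * b), Nat.zero_le (b * b)])
  rw [norm_mul, norm_mul, norm_pow]
  calc ‖q‖ ^ ((a + 2 * b) ^ 2) * (‖coeff a U‖ * ‖coeff b V‖)
      ≤ ‖q‖ ^ (a ^ 2 + b ^ 2) * (M ^ a * N ^ b) :=
        mul_le_mul hq' (mul_le_mul (hU a) (hV b) (norm_nonneg _) (by positivity))
          (by positivity) (by positivity)
    _ = _ := by ring

/-- The pairs `(a, b)` are sent to `(a, 2b)`, where the coefficients of `expand 2 V` live. -/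
theorem tsum_pow_sq_mul_coeff_mul_coeff {q : 𝕜} (hq : ‖q‖ < 1) {U V : 𝕜⟦X⟧} {M N : ℝ}
    (hU : ∀ n, ‖coeff n U‖ ≤ M ^ n) (hV : ∀ n, ‖coeff n V‖ ≤ N ^ n) :
    ∑' p : ℕ × ℕ, q ^ ((p.1 + 2 * p.2) ^ 2) * (coeff p.1 U * coeff p.2 V) =
      ∑' n, q ^ (n ^ 2) * coeff n (U * expand 2 two_ne_zero V) := by
  set g : ℕ × ℕ → 𝕜 := fun p =>
    q ^ ((p.1 + p.2) ^ 2) * (coeff p.1 U * coeff p.2 (expand 2 two_ne_zero V))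
  set e : ℕ × ℕ → ℕ × ℕ := fun p => (p.1, 2 * p.2)
  have he : e.Injective := fun p p' h => by
    simp only [e, Prod.mk.injEq] at h
    exact Prod.ext h.1 (by omega)
  have hge : g ∘ e = fun p : ℕ × ℕ => q ^ ((p.1 + 2 * p.2) ^ 2) * (coeff p.1 U * coeff p.2 V) := by
    funext p
    simp [g, e, coeff_expand_mul]
  have hg0 : ∀ p ∉ Set.range e, g p = 0 := by
    rintro ⟨i, j⟩ hp
    have hj : ¬2 ∣ j := fun ⟨k, hk⟩ => hp ⟨(i, k), by simp [e, hk]⟩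
    simp [g, coeff_expand_of_not_dvd _ _ _ hj]
  have hsum : Summable g :=
    (he.summable_iff hg0).1 (hge ▸ summable_pow_sq_mul_coeff_mul_coeff hq hU hV)
  calc _ = ∑' p, g (e p) := tsum_congr fun p => (congrFun hge p).symm
    _ = ∑' n, ∑ p ∈ antidiagonal n, g p := by
      rw [he.tsum_eq (Function.support_subset_iff'.2 hg0), hsum.tsum_eq_tsum_sum_antidiagonal]
    _ = _ := by
      refine tsum_congr fun n => ?_
      rw [coeff_mul, mul_sum]
      refine sum_congr rfl fun p hp => ?_
      rw [← mem_antidiagonal.1 hp]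

end Analytic

lemma toNat_exponent_eq (a b : ℕ) :
    (3 * (a : ℤ) ^ 2 + 4 * (b : ℤ) ^ 2 + 4 * a * b - 2 * a).toNat =
      (a + 2 * b) ^ 2 + 4 * a.choose 2 := by
  rw [← Int.toNat_natCast ((a + 2 * b) ^ 2 + 4 * a.choose 2)]
  congr 1
  apply Int.cast_injective (α := ℚ)
  push_cast [Nat.cast_choose_two]
  ring

/-- Example 8 with B = (-1/2, 0)ᵀ (after scaling q → q⁴): the two double-sum
Nahm-type series are equal. -/
theorem example8_double_sums_eq (q : ℂ) (hq : ‖q‖ < 1) :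
    ∑' p : ℕ × ℕ,
      q ^ ((3 * (p.1 : ℤ) ^ 2 + 4 * (p.2 : ℤ) ^ 2 + 4 * p.1 * p.2 - 2 * p.1).toNat) /
        ((∏ k ∈ Finset.range p.1, (1 - q ^ (4 * (k + 1)))) *
          ∏ k ∈ Finset.range p.2, (1 - q ^ (4 * (k + 1)))) =
    ∑' p : ℕ × ℕ,
      q ^ (p.1 ^ 2 + 4 * p.1 * p.2 + 4 * p.2 ^ 2 + 4 * p.2) /
        ((∏ k ∈ Finset.range p.1, (1 - q ^ (4 * (k + 1)))) *
          ∏ k ∈ Finset.range p.2, (1 - q ^ (8 * (k + 1)))) := by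
  have hx : ‖q ^ 4‖ < 1 := by rw [norm_pow]; exact pow_lt_one₀ (norm_nonneg q) hq four_ne_zero
  have hx8 : ‖q ^ 8‖ < 1 := by rw [norm_pow]; exact pow_lt_one₀ (norm_nonneg q) hq (by norm_num)
  have hfun := qExpBig_mul_expand_qExp (x := q ^ 4) fun h => h.norm_eq_one.not_lt hx
  rw [← pow_mul] at hfun
  calc _ = ∑' p : ℕ × ℕ, q ^ ((p.1 + 2 * p.2) ^ 2) *
        (coeff p.1 (qExpBig (q ^ 4)) * coeff p.2 (qExp (q ^ 4))) := by
        refine tsum_congr fun p => ?_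
        rw [toNat_exponent_eq, prod_one_sub_pow_mul_eq_qPochhammer,
          prod_one_sub_pow_mul_eq_qPochhammer, pow_add, pow_mul]
        simp only [qExpBig, qExp, coeff_mk]
        ring
    _ = ∑' p : ℕ × ℕ, q ^ ((p.1 + 2 * p.2) ^ 2) *
        (coeff p.1 (qExp (q ^ 4)) * coeff p.2 (rescale (q ^ 4) (qExp (q ^ 8)))) := by
        rw [tsum_pow_sq_mul_coeff_mul_coeff hq (norm_coeff_qExpBig_le hx) (norm_coeff_qExp_le hx),
          tsum_pow_sq_mul_coeff_mul_coeff hq (norm_coeff_qExp_le hx)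
            (norm_coeff_rescale_qExp_le hx8 hx.le), hfun]
    _ = _ := by
        refine tsum_congr fun p => ?_
        rw [prod_one_sub_pow_mul_eq_qPochhammer, prod_one_sub_pow_mul_eq_qPochhammer,
          show p.1 ^ 2 + 4 * p.1 * p.2 + 4 * p.2 ^ 2 + 4 * p.2 = (p.1 + 2 * p.2) ^ 2 + 4 * p.2 by
            ring, pow_add, pow_mul]
        simp only [qExp, coeff_rescale, coeff_mk]
        ring
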